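/- Let G and H be non-trivial groups, let H act faithfully on a set X, and suppose H is invariably generated. Let {y_i : i ∈ I} ⊆ X satisfy X = ⋃_{i∈I} y_iH, and suppose there exist elements t_i ∈ H (i ∈ I) such that the ⟨t_i⟩-orbit y_i⟨t_i⟩ is infinite for every i ∈ I. For each i let 𝒢_i be a generating set of the coordinate subgroup G_{y_i}, and let S_H be a subset of H that invariably generates H. Then the set S_H ∪ ⋃_{i∈I}(𝒢_i ∪ 𝒢_i·t_i ∪ {t_i}) invariably generates G ≀_X H. -/

import Mathlib

open Function SemidirectProduct

/-- A subset `S` invariably generates `K` if replacing each element of `S` by an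
arbitrary conjugate always yields a generating set of `K`. -/
def InvariablyGenerates (K : Type*) [Group K] (S : Set K) : Prop :=
  ∀ a : K → K, Subgroup.closure ((fun s => (a s)⁻¹ * s * a s) '' S) = ⊤

/-- `K` is invariably generated if `K` invariably generates itself. -/
def IsIG (K : Type*) [Group K] : Prop :=
  InvariablyGenerates K Set.univ

/-- `K` is finitely invariably generated if some finite subset invariably generates it. -/
def IsFIG (K : Type*) [Group K] : Prop :=
  ∃ S : Set K, S.Finite ∧ InvariablyGenerates K S

/-- The base of the wreath product `G ≀_X H`: the restricted direct product
`⨁_{x ∈ X} G`, realized as the finitely supported functions `X → G`. -/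
def WreathBase (G X : Type*) [Group G] : Subgroup (X → G) where
  carrier := {f | (mulSupport f).Finite}
  one_mem' := by simp
  mul_mem' {f g} hf hg := (Set.Finite.union hf hg).subset (mulSupport_mul f g)
  inv_mem' {f} hf := by simpa using hf

lemma mem_wreathBase {G X : Type*} [Group G] {f : X → G} :
    f ∈ WreathBase G X ↔ (mulSupport f).Finite := Iff.rfl

/-- The permutation action of `H` on the base, `(h • f) x = f (h⁻¹ • x)`, so that in the
wreath product conjugation by `h` (i.e. `h · g^{(x)} · h⁻¹`) sends the coordinate subgroup
`G_x` to `G_{h • x}`; equivalently `h⁻¹ · g^{(x)} · h = g^{(h⁻¹ • x)}`, which is the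
left-action rendering of "conjugation multiplies indices on the right". -/
def wreathAut (G H X : Type*) [Group G] [Group H] [MulAction H X] :
    H →* MulAut (WreathBase G X) where
  toFun h :=
    { toFun := fun f => ⟨fun x => (f : X → G) (h⁻¹ • x),
        mem_wreathBase.mpr (((mem_wreathBase.mp f.2).image (h • ·)).subset
          fun x hx => ⟨h⁻¹ • x, hx, by simp⟩)⟩
      invFun := fun f => ⟨fun x => (f : X → G) (h • x),
        mem_wreathBase.mpr (((mem_wreathBase.mp f.2).image (h⁻¹ • ·)).subset
          fun x hx => ⟨h • x, hx, by simp⟩)⟩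
      left_inv := fun f => Subtype.ext (funext fun x => by simp)
      right_inv := fun f => Subtype.ext (funext fun x => by simp)
      map_mul' := fun f g => Subtype.ext (funext fun x => by simp) }
  map_one' := by
    ext f x
    simp
  map_mul' h₁ h₂ := by
    ext f x
    simp [mul_smul]

/-- The restricted wreath product `G ≀_X H`. -/
abbrev WreathProduct (G H X : Type*) [Group G] [Group H] [MulAction H X] :=
  WreathBase G X ⋊[wreathAut G H X] H

open scoped Classical in
/-- `g^{(y)}`: the element of the base which is `g` in coordinate `y` and trivial elsewhere. -/
noncomputable def WreathBase.single {G : Type*} (X : Type*) [Group G] (y : X) :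
    G →* WreathBase G X where
  toFun g := ⟨fun x => if x = y then g else 1,
    mem_wreathBase.mpr ((Set.finite_singleton y).subset fun x hx => by
      by_contra hxy
      exact hx (if_neg hxy))⟩
  map_one' := Subtype.ext (funext fun x => by simp)
  map_mul' g₁ g₂ := Subtype.ext (funext fun x => by by_cases h : x = y <;> simp [h])

/-- The embedding of `G` onto the coordinate subgroup `G_y` of the wreath product. -/
noncomputable def coordHom (G H : Type*) {X : Type*} [Group G] [Group H] [MulAction H X]
    (y : X) : G →* WreathProduct G H X :=
  SemidirectProduct.inl.comp (WreathBase.single X y)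

/-- `H_X` is of torsion-type if there is `y ∈ X` such that for every `x` in the `H`-orbit
of `y` and every `k ∈ H`, the `⟨k⟩`-orbit of `x` is finite. -/
def IsTorsionType (H X : Type*) [Group H] [MulAction H X] : Prop :=
  ∃ y : X, ∀ x ∈ MulAction.orbit H y, ∀ k : H, (Set.range fun n : ℤ => k ^ n • x).Finite

/-- A `Γ_z`-set: a set of base elements containing, for every `g ∈ G`, an element whose
coordinate at `z` is `g`. -/
def IsGammaSet {G X : Type*} [Group G] (z : X) (Γ : Set (WreathBase G X)) : Prop :=
  ∀ g : G, ∃ f ∈ Γ, (f : X → G) z = g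

/-!
Let `K` be the subgroup generated by the chosen conjugates. As `S_H` invariably generates `H`,
`K` maps onto `H`, so every conjugator may be taken in the base, and after conjugating `K` by a
base element the conjugate of `t_i` becomes `t_i` itself. A conjugate of `(g^{(y_i)} t_i)^{2k}`,
corrected by `t_i^{-2k}`, is then a base element of `K` whose value at `t_i^k y_i` is `g` once `k`
is large, because the `⟨t_i⟩`-orbit of `y_i` is infinite; so the `x`-coordinates of base elements
of `K` exhaust `G` for every `x ∈ y_i H`. Conjugating by these base elements shows that
`{u | u^{(x)} ∈ K}` is normal in `G`; it contains a conjugate of every element of `𝒢_i`, hence is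
`G`. Thus `K` contains the base and, mapping onto `H`, is everything.
-/

theorem MulAction.injective_zpow_smul_of_infinite_range {H X : Type*} [Group H] [MulAction H X]
    {t : H} {y : X} (h : (Set.range fun n : ℤ => t ^ n • y).Infinite) :
    Injective fun n : ℤ => t ^ n • y := by
  have hp : minimalPeriod (t • ·) y = 0 := by
    by_contra hp
    refine h ((Set.finite_range fun k : Fin (minimalPeriod (t • ·) y) => t ^ (k : ℤ) • y).subset ?_)
    rintro _ ⟨n, rfl⟩
    have hmod : 0 ≤ n % (minimalPeriod (t • ·) y : ℤ) := Int.emod_nonneg _ (by exact_mod_cast hp)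
    have hlt : n % (minimalPeriod (t • ·) y : ℤ) < minimalPeriod (t • ·) y :=
      Int.emod_lt_of_pos _ (by omega)
    refine ⟨⟨(n % (minimalPeriod (t • ·) y : ℤ)).toNat, by omega⟩, ?_⟩
    simp only [Int.toNat_of_nonneg hmod]
    exact zpow_smul_mod_minimalPeriod t y n
  intro m n hmn
  have hfix : t ^ (m - n) • y = y := by
    rw [sub_eq_neg_add, zpow_add, mul_smul, show t ^ m • y = t ^ n • y from hmn, ← mul_smul,
      ← zpow_add, neg_add_cancel, zpow_zero, one_smul]
  rw [zpow_smul_eq_iff_minimalPeriod_dvd, hp, Nat.cast_zero, zero_dvd_iff, sub_eq_zero] at hfix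
  exact hfix

namespace SemidirectProduct

variable {N G : Type*} [Group N] [Group G] {φ : G →* MulAut N}

theorem inv_mul_inl_mul (w : N ⋊[φ] G) (n : N) :
    w⁻¹ * inl n * w = inl (φ w.right⁻¹ (w.left⁻¹ * n * w.left)) := by
  ext <;> simp [mul_assoc]

theorem inv_inl_mul_mul_inl_mul_inr (w : N ⋊[φ] G) (n : N) :
    (inl n)⁻¹ * w * inl n * inr w.right⁻¹ = inl (n⁻¹ * w.left * φ w.right n) := by
  ext <;> simp [mul_assoc]

theorem right_pow (w : N ⋊[φ] G) (n : ℕ) : (w ^ n).right = w.right ^ n :=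
  map_pow rightHom w n

variable {K : Subgroup (N ⋊[φ] G)}

theorem exists_inl_conj_mem (hK : ∀ g : G, ∃ k ∈ K, k.right = g) {s : N ⋊[φ] G}
    (hs : ∃ w, w⁻¹ * s * w ∈ K) : ∃ n : N, (inl n)⁻¹ * s * inl n ∈ K := by
  obtain ⟨w, hw⟩ := hs
  obtain ⟨k, hk, hkw⟩ := hK w.right
  refine ⟨(w * k⁻¹).left, ?_⟩
  have hinl : inl (w * k⁻¹).left = w * k⁻¹ := by
    rw [← inl_left_mul_inr_right (w * k⁻¹)]
    simp [hkw]
  rw [hinl]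
  convert K.mul_mem (K.mul_mem hk hw) (K.inv_mem hk) using 1
  group

theorem eq_top_of_forall_inl_mem (hK : ∀ g : G, ∃ k ∈ K, k.right = g)
    (hN : ∀ n : N, inl n ∈ K) : K = ⊤ := by
  refine (Subgroup.eq_top_iff' K).2 fun w => ?_
  obtain ⟨k, hk, hkw⟩ := hK w.right
  have hinr : inr w.right ∈ K := by
    rw [← hkw, ← (K.mul_mem_cancel_left (hN k.left)), inl_left_mul_inr_right]
    exact hk
  rw [← inl_left_mul_inr_right w]
  exact K.mul_mem (hN _) hinr

end SemidirectProduct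

section WreathBasics

variable {G H X : Type*} [Group G] [Group H] [MulAction H X]

@[simp]
theorem wreathAut_apply (h : H) (f : WreathBase G X) (x : X) :
    ((wreathAut G H X h f : WreathBase G X) : X → G) x = (f : X → G) (h⁻¹ • x) := rfl

namespace WreathBase

@[simp]
theorem coe_mul (f f' : WreathBase G X) : ((f * f' : WreathBase G X) : X → G) = f * f' := rfl

@[simp]
theorem coe_inv (f : WreathBase G X) : ((f⁻¹ : WreathBase G X) : X → G) = (f : X → G)⁻¹ := rfl

@[simp]
theorem coe_one : ((1 : WreathBase G X) : X → G) = 1 := rfl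

open scoped Classical in
theorem single_apply (z : X) (u : G) (x : X) :
    ((single X z u : WreathBase G X) : X → G) x = if x = z then u else 1 := rfl

theorem single_apply_same (z : X) (u : G) : ((single X z u : WreathBase G X) : X → G) z = u := by
  simp [single_apply]

theorem single_apply_of_ne {z x : X} (hx : x ≠ z) (u : G) :
    ((single X z u : WreathBase G X) : X → G) x = 1 := by
  simp [single_apply, hx]

def eval (x : X) : WreathBase G X →* G where
  toFun f := (f : X → G) x
  map_one' := rfl
  map_mul' _ _ := rfl

@[simp]
theorem eval_apply (x : X) (f : WreathBase G X) : eval x f = (f : X → G) x := rfl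

theorem wreathAut_single (h : H) (z : X) (u : G) :
    wreathAut G H X h (single X z u) = single X (h • z) u := by
  ext x
  by_cases hx : x = h • z
  · subst hx; simp [single_apply_same]
  · rw [wreathAut_apply, single_apply_of_ne hx, single_apply_of_ne (mt inv_smul_eq_iff.1 hx)]

theorem inv_mul_single_mul (f : WreathBase G X) (z : X) (u : G) :
    f⁻¹ * single X z u * f = single X z (((f : X → G) z)⁻¹ * u * (f : X → G) z) := by
  ext x
  by_cases hx : x = z
  · subst hx; simp [single_apply_same]
  · simp [single_apply_of_ne hx]

open Filter in
theorem eventually_apply_eq_one (f : WreathBase G X) {e : ℕ → X} (he : Injective e) :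
    ∀ᶠ k in atTop, (f : X → G) (e k) = 1 := by
  rw [← Nat.cofinite_eq_atTop]
  exact (he.tendsto_cofinite.eventually (mem_wreathBase.1 f.2).eventually_cofinite_notMem).mono
    fun _ => notMem_mulSupport.1

theorem mem_of_forall_single_mem {M : Subgroup (WreathBase G X)}
    (hM : ∀ x u, single X x u ∈ M) (f : WreathBase G X) : f ∈ M := by
  classical
  suffices ∀ s : Finset X, ∀ f : WreathBase G X, mulSupport (f : X → G) ⊆ s → f ∈ M from
    this (mem_wreathBase.1 f.2).toFinset f (by simp)
  intro s
  induction s using Finset.induction_on with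
  | empty =>
    intro f hf
    have : f = 1 := by ext x; simpa using mulSupport_subset_iff'.1 hf x
    exact this ▸ M.one_mem
  | insert z s _ ih =>
    intro f hf
    have hrest :
        mulSupport (((single X z ((f : X → G) z))⁻¹ * f : WreathBase G X) : X → G) ⊆ s := by
      intro x hx
      by_cases hxz : x = z
      · subst hxz; simp [single_apply_same] at hx
      · exact (Finset.mem_insert.1 (hf (by simpa [single_apply_of_ne hxz] using hx))).resolve_left
          hxz
    simpa using M.mul_mem (hM z ((f : X → G) z)) (ih _ hrest)

end WreathBase

end WreathBasics

namespace WreathProduct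

variable {G H X : Type*} [Group G] [Group H] [MulAction H X] {K : Subgroup (WreathProduct G H X)}

theorem coordHom_apply (z : X) (u : G) :
    coordHom G H z u = inl (WreathBase.single X z u) := rfl

theorem inv_mul_coordHom_mul (w : WreathProduct G H X) (z : X) (u : G) :
    w⁻¹ * coordHom G H z u * w = coordHom G H (w.right⁻¹ • z)
      ((((w.left : WreathBase G X) : X → G) z)⁻¹ * u * ((w.left : WreathBase G X) : X → G) z) := by
  rw [coordHom_apply, inv_mul_inl_mul, WreathBase.inv_mul_single_mul, WreathBase.wreathAut_single]
  rfl

theorem left_pow_apply [DecidableEq X] (y : X) (g : G) (t : H) (n : ℕ) (x : X) :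
    ((((coordHom G H y g * inr t) ^ n).left : WreathBase G X) : X → G) x
      = g ^ ((Finset.range n).filter fun k => t ^ k • y = x).card := by
  induction n with
  | zero => simp
  | succ n ih =>
    rw [pow_succ, mul_left, WreathBase.coe_mul, Pi.mul_apply, ih, right_pow, wreathAut_apply,
      Finset.range_add_one, Finset.filter_insert]
    have hright : (coordHom G H y g * inr t).right = t := by simp [coordHom_apply]
    have hleft : (coordHom G H y g * inr t).left = WreathBase.single X y g := by
      simp [coordHom_apply]
    rw [hright, hleft, WreathBase.single_apply]
    by_cases hx : t ^ n • y = x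
    · rw [if_pos (inv_smul_eq_iff.2 hx.symm), if_pos hx, Finset.card_insert_of_notMem (by simp),
        pow_succ]
    · rw [if_neg (mt inv_smul_eq_iff.1 (Ne.symm hx)), if_neg hx, mul_one]

/-- `evalSubgroup K x = ⊤` says that the base part of `K` is a `Γ_x`-set (`IsGammaSet`). -/
def evalSubgroup (K : Subgroup (WreathProduct G H X)) (x : X) : Subgroup G :=
  (K.comap inl).map (WreathBase.eval x)

theorem conj_mem_evalSubgroup {w : WreathProduct G H X} (hw : w ∈ K) {x : X} {u : G}
    (hu : u ∈ evalSubgroup K (w.right • x)) :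
    (((w.left : WreathBase G X) : X → G) (w.right • x))⁻¹ * u *
      ((w.left : WreathBase G X) : X → G) (w.right • x) ∈ evalSubgroup K x := by
  obtain ⟨f, hf, rfl⟩ := hu
  refine ⟨wreathAut G H X w.right⁻¹ (w.left⁻¹ * f * w.left), ?_, ?_⟩
  · show inl _ ∈ K
    rw [← inv_mul_inl_mul]
    exact K.mul_mem (K.mul_mem (K.inv_mem hw) hf) hw
  · simp only [WreathBase.eval_apply, wreathAut_apply, WreathBase.coe_mul, WreathBase.coe_inv,
      Pi.mul_apply, Pi.inv_apply, inv_inv]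

theorem evalSubgroup_eq_top_of_mem_orbit (hK : ∀ h : H, ∃ k ∈ K, k.right = h) {y x : X}
    (hy : evalSubgroup K y = ⊤) (hx : x ∈ MulAction.orbit H y) : evalSubgroup K x = ⊤ := by
  obtain ⟨h, rfl⟩ := hx
  obtain ⟨w, hw, hwr⟩ := hK h⁻¹
  set c := ((w.left : WreathBase G X) : X → G) y
  refine (Subgroup.eq_top_iff' _).2 fun u => ?_
  have hmem := conj_mem_evalSubgroup (u := c * u * c⁻¹) hw (x := h • y)
    (by rw [hwr, inv_smul_smul, hy]; trivial)
  rwa [hwr, inv_smul_smul, show c⁻¹ * (c * u * c⁻¹) * c = u by group] at hmem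

theorem conj_mem_comap_coordHom {w : WreathProduct G H X} (hw : w ∈ K) {z : X} {u : G}
    (hu : u ∈ K.comap (coordHom G H z)) :
    (((w.left : WreathBase G X) : X → G) z)⁻¹ * u * ((w.left : WreathBase G X) : X → G) z
      ∈ K.comap (coordHom G H (w.right⁻¹ • z)) := by
  rw [Subgroup.mem_comap, ← inv_mul_coordHom_mul]
  exact K.mul_mem (K.mul_mem (K.inv_mem hw) hu) hw

theorem exists_conj_mem_comap_coordHom (hK : ∀ h : H, ∃ k ∈ K, k.right = h) {z x : X} {u : G}
    (hu : u ∈ K.comap (coordHom G H z)) (hx : x ∈ MulAction.orbit H z) :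
    ∃ c : G, c⁻¹ * u * c ∈ K.comap (coordHom G H x) := by
  obtain ⟨h, rfl⟩ := hx
  obtain ⟨w, hw, hwr⟩ := hK h⁻¹
  have hmem := conj_mem_comap_coordHom hw hu
  rw [hwr, inv_inv] at hmem
  exact ⟨_, hmem⟩

/-- Conjugating `g^{(x)}` by a base element `f` of `K` conjugates `g` by `f x`. -/
theorem comap_coordHom_normal {x : X} (hx : evalSubgroup K x = ⊤) :
    (K.comap (coordHom G H x)).Normal := by
  refine ⟨fun u hu δ => ?_⟩
  obtain ⟨f, hf, hfx⟩ := hx ▸ Subgroup.mem_top δ⁻¹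
  have hmem := conj_mem_comap_coordHom (w := inl f) hf hu
  simp only [WreathBase.eval_apply, left_inl, right_inl, inv_one, one_smul] at hfx hmem
  rwa [hfx, inv_inv] at hmem

open Filter in
/-- The power `(g^{(y)} t)^{2k}`, conjugated by a base element `F` and corrected by `t^{-2k}`,
is a base element equal to `g` at `t^k y` as soon as `F` is trivial at `t^k y` and `t^{-k} y`,
which holds for all large `k` because the `⟨t⟩`-orbit of `y` is infinite. -/
theorem mem_evalSubgroup_of_exists_conj_mem (hK : ∀ h : H, ∃ k ∈ K, k.right = h) {y : X} {t : H}
    (ht : inr t ∈ K) (hinj : Injective fun n : ℤ => t ^ n • y) {g : G}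
    (hv : ∃ w, w⁻¹ * (coordHom G H y g * inr t) * w ∈ K) : g ∈ evalSubgroup K y := by
  classical
  obtain ⟨F, hF⟩ := exists_inl_conj_mem hK hv
  have hinjN : Injective fun k : ℕ => t ^ k • y := fun a b hab =>
    Nat.cast_injective (hinj (by simpa only [zpow_natCast] using hab))
  have hinjN' : Injective fun k : ℕ => (t ^ k)⁻¹ • y := fun a b hab =>
    Nat.cast_injective (neg_injective (hinj (by simpa only [zpow_neg, zpow_natCast] using hab)))
  obtain ⟨k, hk0, hFk, hFk'⟩ := ((eventually_ne_atTop 0).and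
    ((WreathBase.eventually_apply_eq_one F hinjN).and
      (WreathBase.eventually_apply_eq_one F hinjN'))).exists
  set v := coordHom G H y g * inr t
  have hvright : v.right = t := by simp [v, coordHom_apply]
  have hmem : inl (F⁻¹ * (v ^ (k + k)).left * wreathAut G H X (v ^ (k + k)).right F) ∈ K := by
    rw [← inv_inl_mul_mul_inl_mul_inr, right_pow, hvright, map_inv, map_pow,
      show (inl F)⁻¹ * v ^ (k + k) * inl F = ((inl F)⁻¹ * v * inl F) ^ (k + k) by
        simpa using (conj_pow (a := (inl F)⁻¹) (b := v)).symm]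
    exact K.mul_mem (K.pow_mem hF _) (K.inv_mem (K.pow_mem ht _))
  have hval : g ∈ evalSubgroup K (t ^ k • y) := by
    refine ⟨_, hmem, ?_⟩
    have hwindow : ((Finset.range (k + k)).filter fun i => t ^ i • y = t ^ k • y) = {k} := by
      simp only [hinjN.eq_iff, Finset.filter_eq', Finset.mem_range]
      rw [if_pos (by omega)]
    rw [WreathBase.eval_apply, WreathBase.coe_mul, WreathBase.coe_mul, Pi.mul_apply, Pi.mul_apply,
      WreathBase.coe_inv, Pi.inv_apply, wreathAut_apply, left_pow_apply, hwindow,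
      Finset.card_singleton, pow_one, hFk, right_pow, hvright, pow_add, mul_inv_rev, mul_smul,
      inv_smul_smul, hFk', inv_one, one_mul, mul_one]
  have hmem' := conj_mem_evalSubgroup (w := inr (t ^ k)) (by rw [map_pow]; exact K.pow_mem ht k)
    (x := y) (by rwa [right_inr])
  simpa only [left_inr, WreathBase.coe_one, Pi.one_apply, inv_one, one_mul, mul_one] using hmem'

theorem comap_coordHom_eq_top_of_inr_mem (hK : ∀ h : H, ∃ k ∈ K, k.right = h) {y : X} {t : H}
    (ht : inr t ∈ K) (hinj : Injective fun n : ℤ => t ^ n • y) {𝒢 : Set G}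
    (h𝒢 : Subgroup.closure 𝒢 = ⊤) (hs : ∀ g ∈ 𝒢, ∃ w, w⁻¹ * coordHom G H y g * w ∈ K)
    (hv : ∀ g ∈ 𝒢, ∃ w, w⁻¹ * (coordHom G H y g * inr t) * w ∈ K)
    {x : X} (hx : x ∈ MulAction.orbit H y) : K.comap (coordHom G H x) = ⊤ := by
  have hy : evalSubgroup K y = ⊤ := by
    rw [eq_top_iff, ← h𝒢, Subgroup.closure_le]
    exact fun g hg => mem_evalSubgroup_of_exists_conj_mem hK ht hinj (hv g hg)
  have hnormal := comap_coordHom_normal (evalSubgroup_eq_top_of_mem_orbit hK hy hx)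
  rw [eq_top_iff, ← h𝒢, Subgroup.closure_le]
  intro g hg
  obtain ⟨w, hw⟩ := hs g hg
  rw [inv_mul_coordHom_mul, ← Subgroup.mem_comap] at hw
  obtain ⟨c, hc⟩ := exists_conj_mem_comap_coordHom hK hw (x := x) (by rwa [MulAction.orbit_smul])
  have hg := hnormal.conj_mem _ hc (((w.left : WreathBase G X) : X → G) y * c)
  rwa [show ∀ d : G, d * c * (c⁻¹ * (d⁻¹ * g * d) * c) * (d * c)⁻¹ = g by intro; group] at hg

theorem comap_coordHom_eq_top (hK : ∀ h : H, ∃ k ∈ K, k.right = h) {y : X} {t : H}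
    (ht : ∃ w, w⁻¹ * inr t * w ∈ K) (hinj : Injective fun n : ℤ => t ^ n • y)
    {𝒢 : Set G} (h𝒢 : Subgroup.closure 𝒢 = ⊤)
    (hs : ∀ g ∈ 𝒢, ∃ w, w⁻¹ * coordHom G H y g * w ∈ K)
    (hv : ∀ g ∈ 𝒢, ∃ w, w⁻¹ * (coordHom G H y g * inr t) * w ∈ K)
    {x : X} (hx : x ∈ MulAction.orbit H y) : K.comap (coordHom G H x) = ⊤ := by
  obtain ⟨E, hE⟩ := exists_inl_conj_mem hK ht
  set K' := K.comap (MulAut.conj (inl E)⁻¹).toMonoidHom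
  have hmemK' : ∀ s, s ∈ K' ↔ (inl E)⁻¹ * s * inl E ∈ K := by simp [K']
  have hconj : ∀ s, (∃ w, w⁻¹ * s * w ∈ K) → ∃ w, w⁻¹ * s * w ∈ K' := by
    rintro s ⟨w, hw⟩
    exact ⟨w * (inl E)⁻¹, by rw [hmemK']; convert hw using 1; group⟩
  have hK' : ∀ h : H, ∃ k ∈ K', k.right = h := fun h => by
    obtain ⟨k, hk, hkr⟩ := hK h
    exact ⟨inl E * k * (inl E)⁻¹, by rw [hmemK']; convert hk using 1; group, by simp [hkr]⟩
  have htop := comap_coordHom_eq_top_of_inr_mem hK' ((hmemK' _).2 hE) hinj h𝒢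
    (fun g hg => hconj _ (hs g hg)) (fun g hg => hconj _ (hv g hg)) hx
  refine (Subgroup.eq_top_iff' _).2 fun u => ?_
  set e := ((E : WreathBase G X) : X → G) x
  have hu := htop ▸ Subgroup.mem_top (e * u * e⁻¹)
  rw [Subgroup.mem_comap, hmemK', inv_mul_coordHom_mul, right_inl, inv_one, one_smul, left_inl,
    show e⁻¹ * (e * u * e⁻¹) * e = u by group] at hu
  exact hu

theorem invariablyGenerates_of_subset {I : Type*} {y : I → X}
    (hcover : ∀ x : X, ∃ i : I, x ∈ MulAction.orbit H (y i))
    {t : I → H} (ht : ∀ i : I, (Set.range fun n : ℤ => t i ^ n • y i).Infinite)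
    {𝒢 : I → Set G} (h𝒢 : ∀ i : I, Subgroup.closure (𝒢 i) = ⊤)
    {S_H : Set H} (hS_H : InvariablyGenerates H S_H) {S : Set (WreathProduct G H X)}
    (hinr : ∀ s ∈ S_H, inr s ∈ S) (ht_mem : ∀ i, inr (t i) ∈ S)
    (hs_mem : ∀ i, ∀ g ∈ 𝒢 i, coordHom G H (y i) g ∈ S)
    (hv_mem : ∀ i, ∀ g ∈ 𝒢 i, coordHom G H (y i) g * inr (t i) ∈ S) :
    InvariablyGenerates (WreathProduct G H X) S := by
  intro a
  set K := Subgroup.closure ((fun s => (a s)⁻¹ * s * a s) '' S)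
  have hconj : ∀ s ∈ S, ∃ w, w⁻¹ * s * w ∈ K := fun s hs =>
    ⟨a s, Subgroup.subset_closure ⟨s, hs, rfl⟩⟩
  have hK : ∀ h : H, ∃ k ∈ K, k.right = h := by
    have hmap : K.map rightHom = ⊤ := by
      rw [eq_top_iff, ← hS_H (fun s => rightHom (a (inr s))), Subgroup.closure_le]
      rintro _ ⟨s, hs, rfl⟩
      exact ⟨_, Subgroup.subset_closure ⟨inr s, hinr s hs, rfl⟩, by simp⟩
    intro h
    obtain ⟨k, hk, rfl⟩ := hmap ▸ Subgroup.mem_top h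
    exact ⟨k, hk, rfl⟩
  refine eq_top_of_forall_inl_mem hK
    (WreathBase.mem_of_forall_single_mem (M := K.comap inl) fun x u => ?_)
  obtain ⟨i, hi⟩ := hcover x
  have htop := comap_coordHom_eq_top hK (hconj _ (ht_mem i))
    (MulAction.injective_zpow_smul_of_infinite_range (ht i)) (h𝒢 i)
    (fun g hg => hconj _ (hs_mem i g hg)) (fun g hg => hconj _ (hv_mem i g hg)) hi
  exact (htop ▸ Subgroup.mem_top u : u ∈ K.comap (coordHom G H x))

end WreathProduct
theorem stmt_17_general (G H X : Type*) [Group G] [Group H]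
    [MulAction H X]
    {I : Type*} (y : I → X)
    (hcover : ∀ x : X, ∃ i : I, x ∈ MulAction.orbit H (y i))
    (t : I → H) (ht : ∀ i : I, (Set.range fun n : ℤ => t i ^ n • y i).Infinite)
    (𝒢 : I → Set G) (h𝒢 : ∀ i : I, Subgroup.closure (𝒢 i) = ⊤)
    (S_H : Set H) (hS : InvariablyGenerates H S_H) :
    InvariablyGenerates (WreathProduct G H X)
      (((fun s => (inr s : WreathProduct G H X)) '' S_H) ∪
        ⋃ i : I,
          ((fun g => coordHom G H (y i) g) '' 𝒢 i) ∪
            ((fun g => coordHom G H (y i) g * inr (t i)) '' 𝒢 i) ∪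
            {inr (t i)}) :=
  WreathProduct.invariablyGenerates_of_subset hcover ht h𝒢 hS
    (fun s hs => Or.inl ⟨s, hs, rfl⟩)
    (fun i => Or.inr (Set.mem_iUnion.2 ⟨i, Or.inr rfl⟩))
    (fun i g hg => Or.inr (Set.mem_iUnion.2 ⟨i, Or.inl (Or.inl ⟨g, hg, rfl⟩)⟩))
    (fun i g hg => Or.inr (Set.mem_iUnion.2 ⟨i, Or.inl (Or.inr ⟨g, hg, rfl⟩)⟩))

theorem stmt_17 (G H X : Type*) [Group G] [Group H] [Nontrivial G] [Nontrivial H]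
    [MulAction H X] [FaithfulSMul H X] (hH : IsIG H)
    {I : Type*} (y : I → X)
    (hcover : ∀ x : X, ∃ i : I, x ∈ MulAction.orbit H (y i))
    (t : I → H) (ht : ∀ i : I, (Set.range fun n : ℤ => t i ^ n • y i).Infinite)
    (𝒢 : I → Set G) (h𝒢 : ∀ i : I, Subgroup.closure (𝒢 i) = ⊤)
    (S_H : Set H) (hS : InvariablyGenerates H S_H) :
    InvariablyGenerates (WreathProduct G H X)
      (((fun s => (inr s : WreathProduct G H X)) '' S_H) ∪
        ⋃ i : I,
          ((fun g => coordHom G H (y i) g) '' 𝒢 i) ∪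
            ((fun g => coordHom G H (y i) g * inr (t i)) '' 𝒢 i) ∪
            {inr (t i)}) :=
  stmt_17_general G H X y hcover t ht 𝒢 h𝒢 S_H hS
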